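/- arXiv:2605.03709 — 2 statements merged into one kernel-verified Lean document; each statement's English description precedes it below -/
import Mathlib

section
/- Let K ⊆ ℝ^(n+m) be closed and partially convex in x, with every slice K_y compact and convex, and suppose the set-valued map y ↦ K_y is both upper and lower hemicontinuous on π_Y(K). If z = (x_z, y_z) ∉ K, then there exists a continuous function f : ℝ^(n+m) → ℝ, affine in x for every fixed y, such that f ≥ 0 on K and f(x_z, y_z) < 0. -/
/-!
Let `P y` be the point of the slice `K_y` nearest to `z.1` in the Euclidean distance. Upper and
lower hemicontinuity, together with uniqueness of nearest points in convex sets, make `P`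
continuous on the projection `Y` of `K`, and `w y = (P y - z.1) / ‖P y - z.1‖²` satisfies
`⟪w y, x - z.1⟫ ≥ 1` on `K_y` as long as `z.1 ∉ K_y`, which is the case for `y` near `z.2`.
At points of the closure of `Y` outside `Y` the slices escape to infinity because `K` is closed,
so `w` tends to `0` there. Hence, for small `r`, `w` extends continuously from
`Y ∩ closedBall z.2 r` to its closure, and then by Tietze to all parameters. Multiplying
`⟪w y, x - z.1⟫ - 1/2` by a bump function at `z.2` gives the separating function.
-/

open Filter Topology Set Metric
open scoped RealInnerProductSpace

universe u v

theorem image_snd_preimage_prodMap_id {α β γ : Type*} {f : α → β} (hf : Function.Surjective f)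
    (K : Set (β × γ)) : Prod.snd '' (Prod.map f id ⁻¹' K) = Prod.snd '' K := by
  conv_rhs => rw [← (hf.prodMap Function.surjective_id).image_preimage K, image_image]
  rfl

section Hemicontinuity

variable {E F : Type*} [TopologicalSpace E] [TopologicalSpace F]

def SeqUpperHemicontinuousOn (K : Set (E × F)) (Y : Set F) : Prop :=
  ∀ y ∈ Y, ∀ yk : ℕ → F, (∀ k, yk k ∈ Y) → Tendsto yk atTop (𝓝 y) →
    ∀ xk : ℕ → E, (∀ k, (xk k, yk k) ∈ K) →
      ∃ φ : ℕ → ℕ, StrictMono φ ∧ ∃ x, (x, y) ∈ K ∧ Tendsto (xk ∘ φ) atTop (𝓝 x)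

def SeqLowerHemicontinuousOn (K : Set (E × F)) (Y : Set F) : Prop :=
  ∀ y ∈ Y, ∀ yk : ℕ → F, (∀ k, yk k ∈ Y) → Tendsto yk atTop (𝓝 y) →
    ∀ x, (x, y) ∈ K → ∃ xk : ℕ → E, (∀ k, (xk k, yk k) ∈ K) ∧ Tendsto xk atTop (𝓝 x)

variable {E' : Type*} [TopologicalSpace E'] {K : Set (E × F)} {Y : Set F}

theorem SeqUpperHemicontinuousOn.preimage_prodMap (h : SeqUpperHemicontinuousOn K Y)
    (e : E' ≃ₜ E) : SeqUpperHemicontinuousOn (Prod.map e id ⁻¹' K) Y := by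
  intro y hy yk hyk hlim xk hxk
  obtain ⟨φ, hφ, x, hx, hconv⟩ := h y hy yk hyk hlim (e ∘ xk) hxk
  refine ⟨φ, hφ, e.symm x, by simpa using hx, ?_⟩
  simpa [Function.comp_def] using (e.symm.continuous.tendsto x).comp hconv

theorem SeqLowerHemicontinuousOn.preimage_prodMap (h : SeqLowerHemicontinuousOn K Y)
    (e : E' ≃ₜ E) : SeqLowerHemicontinuousOn (Prod.map e id ⁻¹' K) Y := by
  intro y hy yk hyk hlim x hx
  obtain ⟨xk, hxk, hconv⟩ := h y hy yk hyk hlim (e x) hx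
  refine ⟨e.symm ∘ xk, by simpa using hxk, ?_⟩
  simpa using (e.symm.continuous.tendsto (e x)).comp hconv

end Hemicontinuity

theorem tendsto_nhdsWithin_of_seq {F α : Type*} [TopologicalSpace F] [FirstCountableTopology F]
    {f : F → α} {s : Set F} {y : F} {l : Filter α}
    (h : ∀ u : ℕ → F, (∀ k, u k ∈ s) → Tendsto u atTop (𝓝 y) → Tendsto (f ∘ u) atTop l) :
    Tendsto f (𝓝[s] y) l := by
  refine tendsto_of_seq_tendsto fun u hu => ?_
  obtain ⟨hlim, hmem⟩ := tendsto_nhdsWithin_iff.mp hu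
  obtain ⟨N, hN⟩ := eventually_atTop.mp hmem
  exact (tendsto_add_atTop_iff_nat N).mp <|
    h (fun k => u (k + N)) (fun k => hN _ (Nat.le_add_left N k))
      (hlim.comp (tendsto_add_atTop_nat N))

theorem tendsto_cocompact_of_forall_notMem {E F : Type*} [TopologicalSpace E]
    [TopologicalSpace F] {K : Set (E × F)} (hK : IsClosed K) {s : Set F}
    {g : F → E} (hg : ∀ y ∈ s, (g y, y) ∈ K) {y : F} (hy : ∀ x, (x, y) ∉ K) :
    Tendsto g (𝓝[s] y) (cocompact E) := by
  refine hasBasis_cocompact.tendsto_right_iff.mpr fun C hC => ?_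
  obtain ⟨U, V, -, hV, hCU, hyV, hUV⟩ := generalized_tube_lemma hC isCompact_singleton
    hK.isOpen_compl (by rintro ⟨x, y'⟩ ⟨-, rfl⟩; exact hy x)
  filter_upwards [nhdsWithin_le_nhds (hV.mem_nhds (hyV rfl)), self_mem_nhdsWithin]
    with y' hy'V hy's hgC
  exact hUV ⟨hCU hgC, hy'V⟩ (hg y' hy's)

theorem exists_continuous_eqOn_of_tendsto {E : Type u} {F : Type v} [TopologicalSpace E]
    [TopologicalSpace F] [NormalSpace F] [T3Space E] [TietzeExtension.{v, u} E]
    {s : Set F} {f : F → E} (hf : ContinuousOn f s)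
    (hlim : ∀ y ∈ closure s, ∃ l, Tendsto f (𝓝[s] y) (𝓝 l)) : ∃ g : C(F, E), EqOn g f s := by
  obtain ⟨g, hg⟩ := ContinuousMap.exists_restrict_eq isClosed_closure
    ⟨(closure s).domRestrict (extendFrom s f),
      (continuousOn_extendFrom subset_rfl hlim).domRestrict⟩
  exact ⟨g, fun y hy => (congr($hg ⟨y, subset_closure hy⟩)).trans (extendFrom_extends hf y hy)⟩

section NearestPoint

variable {E : Type*} [NormedAddCommGroup E] [InnerProductSpace ℝ E] {S : Set E} {p q : E}

theorem IsMinOn.norm_sub_sq_le_inner (hS : Convex ℝ S) (hq : q ∈ S)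
    (hmin : IsMinOn (‖· - p‖) S q) {x : E} (hx : x ∈ S) : ‖q - p‖ ^ 2 ≤ ⟪q - p, x - p⟫ := by
  have : Nonempty S := ⟨⟨q, hq⟩⟩
  have hbdd : BddBelow (range fun w : S => ‖p - w‖) :=
    ⟨0, forall_mem_range.mpr fun _ => norm_nonneg _⟩
  have hinf : ‖p - q‖ = ⨅ w : S, ‖p - w‖ :=
    le_antisymm (le_ciInf fun w => by rw [norm_sub_rev p q, norm_sub_rev p]; exact hmin w.2)
      (ciInf_le hbdd ⟨q, hq⟩)
  have hobtuse := (norm_eq_iInf_iff_real_inner_le_zero hS hq).mp hinf x hx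
  have hsplit : x - p = (x - q) + (q - p) := by abel
  rw [hsplit, inner_add_right, real_inner_self_eq_norm_sq, ← neg_sub p q, inner_neg_left]
  linarith

theorem IsMinOn.eq_of_norm_sub_le (hS : Convex ℝ S) (hq : q ∈ S) (hmin : IsMinOn (‖· - p‖) S q)
    {q' : E} (hq' : q' ∈ S) (hle : ‖q' - p‖ ≤ ‖q - p‖) : q' = q := by
  have hmin' : IsMinOn (‖· - p‖) S q' := fun x hx => hle.trans (hmin hx)
  have h₁ := hmin.norm_sub_sq_le_inner hS hq hq'
  have h₂ := hmin'.norm_sub_sq_le_inner hS hq' hq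
  have hsq : ‖(q' - p) - (q - p)‖ ^ 2 ≤ 0 := by
    rw [norm_sub_sq_real]; linarith [real_inner_comm (q - p) (q' - p)]
  rw [sub_sub_sub_cancel_right] at hsq
  exact sub_eq_zero.mp (norm_eq_zero.mp (by nlinarith [norm_nonneg (q' - q)]))

theorem IsMinOn.one_le_inner_inv_norm_sq_smul (hS : Convex ℝ S) (hq : q ∈ S)
    (hmin : IsMinOn (‖· - p‖) S q) (hqp : q ≠ p) {x : E} (hx : x ∈ S) :
    1 ≤ ⟪(‖q - p‖ ^ 2)⁻¹ • (q - p), x - p⟫ := by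
  have hpos : 0 < ‖q - p‖ ^ 2 := by positivity [sub_ne_zero.mpr hqp]
  rw [real_inner_smul_left, ← div_eq_inv_mul, one_le_div hpos]
  exact hmin.norm_sub_sq_le_inner hS hq hx

theorem tendsto_inv_norm_sq_smul_cocompact [ProperSpace E] (p : E) :
    Tendsto (fun v => (‖v - p‖ ^ 2)⁻¹ • (v - p)) (cocompact E) (𝓝 0) := by
  refine tendsto_zero_iff_norm_tendsto_zero.mpr <|
    (tendsto_inv_atTop_zero.comp (tendsto_dist_right_cocompact_atTop p)).congr fun v => ?_
  rw [Function.comp_apply, dist_eq_norm, norm_smul, norm_inv, norm_pow, norm_norm]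
  rcases eq_or_ne ‖v - p‖ 0 with h | h
  · simp [h]
  · field_simp

end NearestPoint

section NearestPointMap

variable {E F : Type*} [NormedAddCommGroup E] [InnerProductSpace ℝ E] [TopologicalSpace F]
  [FirstCountableTopology F] {K : Set (E × F)} {Y : Set F} {p : E} {P : F → E}

theorem continuousWithinAt_of_isMinOn_norm_sub (hconv : ∀ y, Convex ℝ {x | (x, y) ∈ K})
    (huhc : SeqUpperHemicontinuousOn K Y) (hlhc : SeqLowerHemicontinuousOn K Y)
    (hPK : ∀ y ∈ Y, (P y, y) ∈ K) (hPmin : ∀ y ∈ Y, IsMinOn (‖· - p‖) {x | (x, y) ∈ K} (P y))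
    {y : F} (hy : y ∈ Y) : ContinuousWithinAt P Y y := by
  refine tendsto_nhdsWithin_of_seq fun u huY hu => ?_
  obtain ⟨x, hxK, hx⟩ := hlhc y hy u huY hu (P y) (hPK y hy)
  refine tendsto_of_subseq_tendsto fun ns hns => ?_
  obtain ⟨φ, hφ, q, hqK, hq⟩ :=
    huhc y hy (u ∘ ns) (fun k => huY _) (hu.comp hns) (P ∘ u ∘ ns) (fun k => hPK _ (huY _))
  have hle : ‖q - p‖ ≤ ‖P y - p‖ :=
    le_of_tendsto_of_tendsto' (hq.sub_const p).norm
      (((hx.comp hns).comp hφ.tendsto_atTop).sub_const p).norm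
      fun k => hPmin _ (huY _) (hxK _)
  obtain rfl := (hPmin y hy).eq_of_norm_sub_le (hconv y) (hPK y hy) hqK hle
  exact ⟨φ, hq⟩

end NearestPointMap

section Separation

variable {E F : Type*} [NormedAddCommGroup E] [InnerProductSpace ℝ E] [FiniteDimensional ℝ E]
  [MetricSpace F] {K : Set (E × F)}

theorem exists_continuous_one_le_inner_of_hemicontinuous (hK : IsClosed K)
    (hconv : ∀ y, Convex ℝ {x | (x, y) ∈ K}) (hcomp : ∀ y, IsCompact {x | (x, y) ∈ K})
    (huhc : SeqUpperHemicontinuousOn K (Prod.snd '' K))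
    (hlhc : SeqLowerHemicontinuousOn K (Prod.snd '' K)) {C : Set F} (hC : IsClosed C) {p : E}
    (hp : ∀ y ∈ C, (p, y) ∉ K) :
    ∃ a : C(F, E), ∀ w ∈ K, w.2 ∈ C → 1 ≤ ⟪a w.2, w.1 - p⟫ := by
  set Y := Prod.snd '' K
  have hnearest : ∀ y ∈ Y, ∃ q ∈ {x | (x, y) ∈ K}, IsMinOn (‖· - p‖) {x | (x, y) ∈ K} q := by
    rintro y ⟨w, hw, rfl⟩
    exact (hcomp w.2).exists_isMinOn ⟨w.1, hw⟩ (by fun_prop)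
  choose! P hPK hPmin using hnearest
  have hPcont : ∀ y ∈ Y, ContinuousWithinAt P Y y := fun y hy =>
    continuousWithinAt_of_isMinOn_norm_sub hconv huhc hlhc hPK hPmin hy
  set B := Y ∩ C
  set sep : E → E := fun v => (‖v - p‖ ^ 2)⁻¹ • (v - p)
  have hsep : ContinuousOn (sep ∘ P) B := by
    intro y hy
    have hPy : P y - p ≠ 0 := sub_ne_zero.mpr fun h => hp y hy.2 (h ▸ hPK y hy.1)
    have : ContinuousAt sep (P y) := by fun_prop (disch := positivity)
    exact this.comp_continuousWithinAt ((hPcont y hy.1).mono inter_subset_left)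
  have hlim : ∀ y ∈ closure B, ∃ l, Tendsto (sep ∘ P) (𝓝[B] y) (𝓝 l) := by
    intro y hy
    by_cases hyY : y ∈ Y
    · exact ⟨_, hsep y ⟨hyY, closure_minimal inter_subset_right hC hy⟩⟩
    · refine ⟨0, (tendsto_inv_norm_sq_smul_cocompact p).comp ?_⟩
      exact tendsto_cocompact_of_forall_notMem hK (fun y' hy' => hPK y' hy'.1)
        fun x hx => hyY ⟨(x, y), hx, rfl⟩
  obtain ⟨a, ha⟩ := exists_continuous_eqOn_of_tendsto hsep hlim
  refine ⟨a, fun w hw hwC => ?_⟩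
  have hwB : w.2 ∈ B := ⟨⟨w, hw, rfl⟩, hwC⟩
  rw [ha hwB]
  exact (hPmin _ hwB.1).one_le_inner_inv_norm_sq_smul (hconv _) (hPK _ hwB.1)
    (fun h => hp _ hwC (h ▸ hPK _ hwB.1)) hw

theorem exists_continuous_inner_add_separation (hK : IsClosed K)
    (hconv : ∀ y, Convex ℝ {x | (x, y) ∈ K}) (hcomp : ∀ y, IsCompact {x | (x, y) ∈ K})
    (huhc : SeqUpperHemicontinuousOn K (Prod.snd '' K))
    (hlhc : SeqLowerHemicontinuousOn K (Prod.snd '' K)) {z : E × F} (hz : z ∉ K) :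
    ∃ (a : F → E) (b : F → ℝ), Continuous a ∧ Continuous b ∧
      (∀ w ∈ K, 0 ≤ ⟪a w.2, w.1⟫ + b w.2) ∧ ⟪a z.2, z.1⟫ + b z.2 < 0 := by
  obtain ⟨r, hr, hball⟩ := Metric.isOpen_iff.mp hK.isOpen_compl z hz
  have hfar : ∀ y ∈ closedBall z.2 (r / 2), (z.1, y) ∉ K := fun y hy =>
    hball <| by rw [mem_ball, Prod.dist_eq, dist_self, max_eq_right dist_nonneg]; linarith [hy.out]
  obtain ⟨a, ha⟩ := exists_continuous_one_le_inner_of_hemicontinuous hK hconv hcomp huhc hlhc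
    isClosed_closedBall hfar
  have hcentre : z.2 ∈ ball z.2 (r / 2) := mem_ball_self (half_pos hr)
  obtain ⟨ρ, hρ0, hρ1, hρI⟩ := exists_continuous_zero_one_of_isClosed isOpen_ball.isClosed_compl
    (isClosed_singleton (x := z.2)) (disjoint_singleton_right.mpr (not_not.mpr hcentre))
  have hform : ∀ w : E × F, ⟪ρ w.2 • a w.2, w.1⟫ + -(ρ w.2 * (⟪a w.2, z.1⟫ + 1 / 2)) =
      ρ w.2 * (⟪a w.2, w.1 - z.1⟫ - 1 / 2) := fun w => by
    rw [real_inner_smul_left, inner_sub_right]; ring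
  refine ⟨fun y => ρ y • a y, fun y => -(ρ y * (⟪a y, z.1⟫ + 1 / 2)), by fun_prop, by fun_prop,
    fun w hw => ?_, ?_⟩
  · rw [hform]
    by_cases hy : w.2 ∈ ball z.2 (r / 2)
    · exact mul_nonneg (hρI _).1 (by linarith [ha w hw (ball_subset_closedBall hy)])
    · simp [hρ0 hy]
  · rw [hform, hρ1 rfl, sub_self, inner_zero_right]
    norm_num

end Separation

/-- Hahn–Banach-type separation for closed partially convex sets with compact
slices and a continuous (upper and lower hemicontinuous) slice map: a point
outside `K` is separated by a continuous function affine in `x` for each `y`. -/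
theorem stmt_10 (n m : ℕ) (K : Set ((Fin n → ℝ) × (Fin m → ℝ)))
    (hKcl : IsClosed K)
    (hconv : ∀ y : Fin m → ℝ, Convex ℝ {x : Fin n → ℝ | (x, y) ∈ K})
    (hcomp : ∀ y : Fin m → ℝ, IsCompact {x : Fin n → ℝ | (x, y) ∈ K})
    (Y : Set (Fin m → ℝ)) (hY : Y = Prod.snd '' K)
    (huhc : ∀ y ∈ Y, ∀ yk : ℕ → (Fin m → ℝ), (∀ k, yk k ∈ Y) →
      Filter.Tendsto yk Filter.atTop (nhds y) →
      ∀ xk : ℕ → (Fin n → ℝ), (∀ k, (xk k, yk k) ∈ K) →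
        ∃ φ : ℕ → ℕ, StrictMono φ ∧ ∃ x : Fin n → ℝ, (x, y) ∈ K ∧
          Filter.Tendsto (xk ∘ φ) Filter.atTop (nhds x))
    (hlhc : ∀ y ∈ Y, ∀ yk : ℕ → (Fin m → ℝ), (∀ k, yk k ∈ Y) →
      Filter.Tendsto yk Filter.atTop (nhds y) →
      ∀ x : Fin n → ℝ, (x, y) ∈ K →
        ∃ xk : ℕ → (Fin n → ℝ), (∀ k, (xk k, yk k) ∈ K) ∧
          Filter.Tendsto xk Filter.atTop (nhds x))
    (z : (Fin n → ℝ) × (Fin m → ℝ)) (hz : z ∉ K) :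
    ∃ f : (Fin n → ℝ) × (Fin m → ℝ) → ℝ, Continuous f ∧
      (∀ (y : Fin m → ℝ) (x₁ x₂ : Fin n → ℝ), ∀ t ∈ Set.Icc (0:ℝ) 1,
        f (t • x₁ + (1 - t) • x₂, y) = t * f (x₁, y) + (1 - t) * f (x₂, y)) ∧
      (∀ w ∈ K, 0 ≤ f w) ∧ f z < 0 := by
  subst hY
  set e := EuclideanSpace.equiv (Fin n) ℝ
  have hY : Prod.snd '' (Prod.map e id ⁻¹' K) = Prod.snd '' K :=
    image_snd_preimage_prodMap_id e.surjective K
  obtain ⟨a, b, ha, hb, hnonneg, hneg⟩ :=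
    exists_continuous_inner_add_separation (K := Prod.map e id ⁻¹' K)
    (hKcl.preimage (by fun_prop)) (fun y => (hconv y).linear_preimage e.toLinearMap)
    (fun y => e.toHomeomorph.isCompact_preimage.mpr (hcomp y))
    (hY ▸ SeqUpperHemicontinuousOn.preimage_prodMap huhc e.toHomeomorph)
    (hY ▸ SeqLowerHemicontinuousOn.preimage_prodMap hlhc e.toHomeomorph)
    (z := (e.symm z.1, z.2)) (by simpa using hz)
  refine ⟨fun w => ⟪a w.2, e.symm w.1⟫ + b w.2, by fun_prop, ?_, ?_, by simpa using hneg⟩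
  · intro y x₁ x₂ t _
    simp only [map_add, map_smul, inner_add_right, real_inner_smul_right]
    ring
  · rintro ⟨x, y⟩ hxy
    simpa using hnonneg (e.symm x, y) (by simpa using hxy)
end

section
/- Let K ⊆ ℝ^(n+m) be a compact regular partially convex set with Y = π_Y(K), and let f ∈ Aff(K_{y₀}) be a nonnegative continuous affine function on the slice K_{y₀} for some y₀ ∈ Y. Then there exists a continuous function G on K, affine in x for each fixed y, such that G ≥ 0 on all of K and G(x, y₀) = f(x) for all x ∈ K_{y₀}. -/
/-!
Since the slice `K_{y₀}` has nonempty interior, the affine function `f` on it is the restriction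
of a (continuous) affine map `A` on the whole space. Put `G(x, y) = A x + δ y`, where
`δ y = max 0 (-min_{x ∈ K_y} A x)` lifts `A` just enough to be nonnegative on every slice.
`δ` vanishes at `y₀` because `f ≥ 0` there, and it is continuous by Berge's maximum theorem:
the minimum over the slices is lower semicontinuous because `K` is compact, and upper
semicontinuous because the interiors of the slices vary lower hemicontinuously and the minimum
over a convex body is approached from its interior.
-/

open Filter Topology Set

def IsAffineOn {E : Type*} [AddCommGroup E] [Module ℝ E] (S : Set E) (f : E → ℝ) : Prop :=
  ∀ x₁ ∈ S, ∀ x₂ ∈ S, ∀ t ∈ Icc (0 : ℝ) 1, f (t • x₁ + (1 - t) • x₂) = t * f x₁ + (1 - t) * f x₂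

theorem exists_pos_add_smul_mem_of_mem_interior {E : Type*} [AddCommGroup E] [Module ℝ E]
    [TopologicalSpace E] [ContinuousAdd E] [ContinuousSMul ℝ E] {S : Set E} {x₀ : E}
    (h : x₀ ∈ interior S) (v : E) : ∃ t > (0 : ℝ), x₀ + t • v ∈ S := by
  have hlim : Tendsto (fun t : ℝ => x₀ + t • v) (𝓝[>] 0) (𝓝 x₀) :=
    ((by fun_prop : Continuous fun t : ℝ => x₀ + t • v).tendsto' 0 x₀ (by simp)).mono_left
      nhdsWithin_le_nhds
  exact ((hlim.eventually (mem_interior_iff_mem_nhds.1 h)).and self_mem_nhdsWithin).exists.imp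
    fun _ ht => ⟨ht.2, ht.1⟩

namespace IsAffineOn

variable {E : Type*} [AddCommGroup E] [Module ℝ E] {S : Set E} {f : E → ℝ} {x₀ : E}

theorem sub_eq_mul_sub (hf : IsAffineOn S f) (hx₀ : x₀ ∈ S) {v : E} (hv : x₀ + v ∈ S) {t : ℝ}
    (ht : t ∈ Icc (0 : ℝ) 1) : f (x₀ + t • v) - f x₀ = t * (f (x₀ + v) - f x₀) := by
  have h := hf _ hv _ hx₀ t ht
  rw [show t • (x₀ + v) + (1 - t) • x₀ = x₀ + t • v by module] at h
  rw [h]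
  ring

theorem div_eq_div_of_le (hf : IsAffineOn S f) (hx₀ : x₀ ∈ S) {v : E} {s t : ℝ} (hs : 0 < s)
    (hst : s ≤ t) (ht : x₀ + t • v ∈ S) :
    (f (x₀ + s • v) - f x₀) / s = (f (x₀ + t • v) - f x₀) / t := by
  have ht₀ : 0 < t := hs.trans_le hst
  have h := hf.sub_eq_mul_sub hx₀ ht ⟨by positivity, (div_le_one ht₀).2 hst⟩
  rw [smul_smul, div_mul_cancel₀ s ht₀.ne'] at h
  rw [h]
  field_simp

theorem div_eq_div (hf : IsAffineOn S f) (hx₀ : x₀ ∈ S) {v : E} {s t : ℝ} (hs : 0 < s)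
    (ht : 0 < t) (hsS : x₀ + s • v ∈ S) (htS : x₀ + t • v ∈ S) :
    (f (x₀ + s • v) - f x₀) / s = (f (x₀ + t • v) - f x₀) / t := by
  rcases le_total s t with hst | hts
  · exact hf.div_eq_div_of_le hx₀ hs hst htS
  · exact (hf.div_eq_div_of_le hx₀ ht hts hsS).symm

theorem exists_slope (hf : IsAffineOn S f) (hx₀ : x₀ ∈ S)
    (hcore : ∀ v : E, ∃ t > (0 : ℝ), x₀ + t • v ∈ S) :
    ∃ L : E → ℝ, ∀ v t, 0 < t → x₀ + t • v ∈ S → f (x₀ + t • v) - f x₀ = t * L v := by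
  choose τ hτ hτS using hcore
  refine ⟨fun v => (f (x₀ + τ v • v) - f x₀) / τ v, fun v t ht htS => ?_⟩
  dsimp only
  rw [← hf.div_eq_div hx₀ ht (hτ v) htS (hτS v), mul_div_cancel₀ _ ht.ne']

variable {L : E → ℝ}

theorem slope_add (hf : IsAffineOn S f) (hS : Convex ℝ S) (hx₀ : x₀ ∈ S)
    (hcore : ∀ v : E, ∃ t > (0 : ℝ), x₀ + t • v ∈ S)
    (hL : ∀ v t, 0 < t → x₀ + t • v ∈ S → f (x₀ + t • v) - f x₀ = t * L v) (v w : E) :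
    L (v + w) = L v + L w := by
  obtain ⟨s, hs, hsv⟩ := hcore v
  obtain ⟨s', hs', hs'w⟩ := hcore w
  set t := min s s'
  have ht : 0 < t := lt_min hs hs'
  have hmem {u : E} {r : ℝ} (hr : 0 < r) (hru : x₀ + r • u ∈ S) (htr : t ≤ r) :
      x₀ + t • u ∈ S := by
    have := hS.add_smul_mem hx₀ hru ⟨(div_pos ht hr).le, (div_le_one hr).2 htr⟩
    rwa [smul_smul, div_mul_cancel₀ t hr.ne'] at this
  have hv := hmem hs hsv (min_le_left _ _)
  have hw := hmem hs' hs'w (min_le_right _ _)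
  have hmid : x₀ + (t / 2) • (v + w) =
      (1 / 2 : ℝ) • (x₀ + t • v) + (1 - 1 / 2 : ℝ) • (x₀ + t • w) := by
    module
  have hvw := hL (v + w) (t / 2) (by positivity)
    (hmid ▸ hS hv hw (by norm_num) (by norm_num) (by norm_num))
  rw [hmid, hf _ hv _ hw _ ⟨by norm_num, by norm_num⟩] at hvw
  nlinarith [hL v t ht hv, hL w t ht hw]

theorem slope_smul (hf : IsAffineOn S f) (hS : Convex ℝ S) (hx₀ : x₀ ∈ S)
    (hcore : ∀ v : E, ∃ t > (0 : ℝ), x₀ + t • v ∈ S)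
    (hL : ∀ v t, 0 < t → x₀ + t • v ∈ S → f (x₀ + t • v) - f x₀ = t * L v) (c : ℝ) (v : E) :
    L (c • v) = c * L v := by
  have hL0 : L 0 = 0 := by simpa using (hL 0 1 one_pos (by simpa using hx₀)).symm
  have hsmul_of_pos {c : ℝ} (hc : 0 < c) (v : E) : L (c • v) = c * L v := by
    obtain ⟨t, ht, htv⟩ := hcore v
    have := hL (c • v) (t / c) (by positivity) (by rwa [smul_smul, div_mul_cancel₀ _ hc.ne'])
    rw [smul_smul, div_mul_cancel₀ _ hc.ne', hL v t ht htv] at this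
    field_simp at this
    exact mul_left_cancel₀ ht.ne' (by rw [← this]; ring)
  rcases lt_trichotomy c 0 with hc | rfl | hc
  · have hneg : L (-((-c) • v)) = -L ((-c) • v) := by
      have := hf.slope_add hS hx₀ hcore hL ((-c) • v) (-((-c) • v))
      rw [add_neg_cancel, hL0] at this
      linarith
    rw [show c • v = -((-c) • v) by module, hneg, hsmul_of_pos (neg_pos.2 hc)]
    ring
  · simp [hL0]
  · exact hsmul_of_pos hc v

theorem exists_affineMap_eqOn (hf : IsAffineOn S f) (hS : Convex ℝ S)
    (hcore : ∀ v : E, ∃ t > (0 : ℝ), x₀ + t • v ∈ S) : ∃ A : E →ᵃ[ℝ] ℝ, EqOn f A S := by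
  have hx₀ : x₀ ∈ S := by simpa using (hcore 0).choose_spec.2
  obtain ⟨L, hL⟩ := hf.exists_slope hx₀ hcore
  let L' : E →ₗ[ℝ] ℝ :=
    ⟨⟨L, hf.slope_add hS hx₀ hcore hL⟩, hf.slope_smul hS hx₀ hcore hL⟩
  refine ⟨AffineMap.mk' (fun x => L' (x - x₀) + f x₀) L' x₀ fun _ => by simp, fun x hx => ?_⟩
  have := hL (x - x₀) 1 one_pos (by simpa using hx)
  simp only [one_smul, add_sub_cancel, one_mul] at this
  change f x = L (x - x₀) + f x₀
  linarith

end IsAffineOn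

section SliceMin

variable {E F : Type*} [TopologicalSpace E] [TopologicalSpace F] {K : Set (E × F)} {φ : E → ℝ}

noncomputable def sliceMin (K : Set (E × F)) (φ : E → ℝ) (y : F) : ℝ :=
  sInf (φ '' {x | (x, y) ∈ K})

variable [T2Space E] [T2Space F]

theorem IsCompact.slice (hK : IsCompact K) (y : F) : IsCompact {x | (x, y) ∈ K} :=
  (hK.image continuous_fst).of_isClosed_subset
    (hK.isClosed.preimage (Continuous.prodMk_left y)) fun x hx => ⟨(x, y), hx, rfl⟩

theorem sliceMin_le (hK : IsCompact K) (hφ : Continuous φ) {x : E} {y : F} (h : (x, y) ∈ K) :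
    sliceMin K φ y ≤ φ x :=
  csInf_le ((hK.slice y).image hφ).bddBelow ⟨x, h, rfl⟩

theorem exists_apply_eq_sliceMin (hK : IsCompact K) (hφ : Continuous φ) {y : F}
    (hy : {x | (x, y) ∈ K}.Nonempty) : ∃ x, (x, y) ∈ K ∧ φ x = sliceMin K φ y :=
  ((hK.slice y).image hφ).sInf_mem (hy.image φ)

/-- The points `y` with `sliceMin K φ y ≤ c` form the projection of a compact set. -/
theorem eventually_lt_sliceMin (hK : IsCompact K) (hφ : Continuous φ) {y : F} {c : ℝ}
    (hc : c < sliceMin K φ y) : ∀ᶠ y' in 𝓝 y, y' ∈ Prod.snd '' K → c < sliceMin K φ y' := by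
  have hC : IsClosed (Prod.snd '' (K ∩ {w | φ w.1 ≤ c})) :=
    ((hK.inter_right (isClosed_le (hφ.comp continuous_fst) continuous_const)).image
      continuous_snd).isClosed
  have hy : y ∉ Prod.snd '' (K ∩ {w | φ w.1 ≤ c}) := by
    rintro ⟨⟨x, _⟩, ⟨hxK, hxc⟩, rfl⟩
    exact (hc.trans_le (sliceMin_le hK hφ hxK)).not_ge hxc
  filter_upwards [hC.isOpen_compl.mem_nhds hy] with y' hy' ⟨⟨x, _⟩, hxK, rfl⟩
  obtain ⟨x', hx'K, hx'⟩ := exists_apply_eq_sliceMin hK hφ ⟨x, hxK⟩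
  by_contra! h
  exact hy' ⟨(x', _), ⟨hx'K, hx'.trans_le h⟩, rfl⟩

/-- A minimiser on the convex body `K_y` is a limit of interior points, and those can be followed
into the slices `K_{yₖ}`. -/
theorem eventually_sliceMin_lt [AddCommGroup E] [Module ℝ E] [IsTopologicalAddGroup E]
    [ContinuousSMul ℝ E] (hK : IsCompact K) (hφ : Continuous φ) {y : F}
    (hconv : Convex ℝ {x | (x, y) ∈ K}) (hint : (interior {x | (x, y) ∈ K}).Nonempty)
    {yk : ℕ → F} (hlhc : ∀ x ∈ interior {x | (x, y) ∈ K}, ∃ xk : ℕ → E,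
      (∀ k, (xk k, yk k) ∈ K) ∧ Tendsto xk atTop (𝓝 x))
    {c : ℝ} (hc : sliceMin K φ y < c) : ∀ᶠ k in atTop, sliceMin K φ (yk k) < c := by
  obtain ⟨x, hxK, hx⟩ := exists_apply_eq_sliceMin hK hφ (hint.mono interior_subset)
  have hx_cl : x ∈ closure (interior {x | (x, y) ∈ K}) := by
    rw [hconv.closure_interior_eq_closure_of_nonempty_interior hint]
    exact subset_closure hxK
  obtain ⟨x', hx'c, hx'⟩ := mem_closure_iff.1 hx_cl {x | φ x < c}
    (isOpen_lt hφ continuous_const) (by simpa [hx] using hc)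
  obtain ⟨xk, hxkK, hxk⟩ := hlhc x' hx'
  filter_upwards [((hφ.tendsto x').comp hxk).eventually_lt_const hx'c] with k hk
  exact (sliceMin_le hK hφ (hxkK k)).trans_lt hk

theorem continuousOn_sliceMin [AddCommGroup E] [Module ℝ E] [IsTopologicalAddGroup E]
    [ContinuousSMul ℝ E] [FirstCountableTopology F] (hK : IsCompact K) (hφ : Continuous φ)
    (hconv : ∀ y ∈ Prod.snd '' K, Convex ℝ {x | (x, y) ∈ K})
    (hint : ∀ y ∈ Prod.snd '' K, (interior {x | (x, y) ∈ K}).Nonempty)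
    (hlhc : ∀ y ∈ Prod.snd '' K, ∀ yk : ℕ → F, (∀ k, yk k ∈ Prod.snd '' K) →
      Tendsto yk atTop (𝓝 y) → ∀ x ∈ interior {x | (x, y) ∈ K},
        ∃ xk : ℕ → E, (∀ k, (xk k, yk k) ∈ K) ∧ Tendsto xk atTop (𝓝 x)) :
    ContinuousOn (sliceMin K φ) (Prod.snd '' K) := by
  rw [continuousOn_iff_continuous_domRestrict, continuous_iff_seqContinuous]
  intro yk y hyk
  have hyk' : Tendsto (fun k => (yk k : F)) atTop (𝓝 y) :=
    (continuous_subtype_val.tendsto y).comp hyk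
  refine tendsto_order.2 ⟨fun c hc => ?_, fun c hc => ?_⟩
  · filter_upwards [hyk'.eventually (eventually_lt_sliceMin hK hφ hc)] with k hk
    exact hk (yk k).2
  · exact eventually_sliceMin_lt hK hφ (hconv y y.2) (hint y y.2)
      (hlhc y y.2 _ (fun k => (yk k).2) hyk') hc

end SliceMin

theorem stmt_16_general (n m : ℕ) (K : Set ((Fin n → ℝ) × (Fin m → ℝ)))
    (hKc : IsCompact K)
    (hconv : ∀ y : Fin m → ℝ, Convex ℝ {x : Fin n → ℝ | (x, y) ∈ K})
    (Y : Set (Fin m → ℝ)) (hY : Y = Prod.snd '' K)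
    (hint : ∀ y ∈ Y, (interior {x : Fin n → ℝ | (x, y) ∈ K}).Nonempty)
    (hlhc : ∀ y ∈ Y, ∀ yk : ℕ → (Fin m → ℝ), (∀ k, yk k ∈ Y) →
      Filter.Tendsto yk Filter.atTop (nhds y) →
      ∀ x ∈ interior {x : Fin n → ℝ | (x, y) ∈ K},
        ∃ xk : ℕ → (Fin n → ℝ),
          (∀ k, xk k ∈ interior {x : Fin n → ℝ | (x, yk k) ∈ K}) ∧
          Filter.Tendsto xk Filter.atTop (nhds x))
    (y₀ : Fin m → ℝ) (hy₀ : y₀ ∈ Y)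
    (f : (Fin n → ℝ) → ℝ)
    (hfaff : ∀ x₁ x₂ : Fin n → ℝ, (x₁, y₀) ∈ K → (x₂, y₀) ∈ K →
      ∀ t ∈ Set.Icc (0:ℝ) 1,
        f (t • x₁ + (1 - t) • x₂) = t * f x₁ + (1 - t) * f x₂)
    (hfpos : ∀ x : Fin n → ℝ, (x, y₀) ∈ K → 0 ≤ f x) :
    ∃ G : (Fin n → ℝ) × (Fin m → ℝ) → ℝ,
      ContinuousOn G K ∧
      (∀ (y : Fin m → ℝ) (x₁ x₂ : Fin n → ℝ), (x₁, y) ∈ K → (x₂, y) ∈ K →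
        ∀ t ∈ Set.Icc (0:ℝ) 1,
          G (t • x₁ + (1 - t) • x₂, y) = t * G (x₁, y) + (1 - t) * G (x₂, y)) ∧
      (∀ w ∈ K, 0 ≤ G w) ∧
      (∀ x : Fin n → ℝ, (x, y₀) ∈ K → G (x, y₀) = f x) := by
  subst hY
  obtain ⟨x₀, hx₀⟩ := hint y₀ hy₀
  have hf : IsAffineOn {x | (x, y₀) ∈ K} f := fun x₁ h₁ x₂ h₂ => hfaff x₁ x₂ h₁ h₂
  obtain ⟨A, hfA⟩ :=
    hf.exists_affineMap_eqOn (hconv y₀) (exists_pos_add_smul_mem_of_mem_interior hx₀)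
  have hA : Continuous A := A.continuous_of_finiteDimensional
  have hM := continuousOn_sliceMin hKc hA (fun y _ => hconv y) hint fun y hy yk hyk hlim x hx =>
    (hlhc y hy yk hyk hlim x hx).imp fun _ h =>
      ⟨fun k => interior_subset (s := {x | (x, yk k) ∈ K}) (h.1 k), h.2⟩
  obtain ⟨x₁, hx₁, hAx₁⟩ := exists_apply_eq_sliceMin hKc hA ⟨x₀, interior_subset hx₀⟩
  have hM₀ : 0 ≤ sliceMin K A y₀ := hAx₁ ▸ hfA hx₁ ▸ hfpos x₁ hx₁
  refine ⟨fun w => A w.1 + max 0 (-sliceMin K A w.2), ?_, ?_, ?_, ?_⟩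
  · exact (hA.comp continuous_fst).continuousOn.add <| continuousOn_const.sup
      (hM.comp continuous_snd.continuousOn (mapsTo_image _ _)).neg
  · intro y x₁ x₂ _ _ t _
    simp only [Convex.combo_affine_apply (add_sub_cancel t 1)]
    ring
  · intro w hw
    linarith [sliceMin_le hKc hA hw, le_max_right 0 (-sliceMin K A w.2)]
  · intro x hx
    simp [max_eq_left (neg_nonpos.2 hM₀), hfA hx]

/-- On a compact regular partially convex set `K`, every nonnegative continuous
affine function on a slice `K_{y₀}` extends to a continuous function on `K`,
affine in `x` for each fixed `y`, nonnegative on all of `K`. -/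
theorem stmt_16 (n m : ℕ) (K : Set ((Fin n → ℝ) × (Fin m → ℝ)))
    (hKc : IsCompact K) (hKcl : IsClosed K)
    (hconv : ∀ y : Fin m → ℝ, Convex ℝ {x : Fin n → ℝ | (x, y) ∈ K})
    (Y : Set (Fin m → ℝ)) (hY : Y = Prod.snd '' K)
    (hint : ∀ y ∈ Y, (interior {x : Fin n → ℝ | (x, y) ∈ K}).Nonempty)
    (hlhc : ∀ y ∈ Y, ∀ yk : ℕ → (Fin m → ℝ), (∀ k, yk k ∈ Y) →
      Filter.Tendsto yk Filter.atTop (nhds y) →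
      ∀ x ∈ interior {x : Fin n → ℝ | (x, y) ∈ K},
        ∃ xk : ℕ → (Fin n → ℝ),
          (∀ k, xk k ∈ interior {x : Fin n → ℝ | (x, yk k) ∈ K}) ∧
          Filter.Tendsto xk Filter.atTop (nhds x))
    (y₀ : Fin m → ℝ) (hy₀ : y₀ ∈ Y)
    (f : (Fin n → ℝ) → ℝ)
    (hfc : ContinuousOn f {x : Fin n → ℝ | (x, y₀) ∈ K})
    (hfaff : ∀ x₁ x₂ : Fin n → ℝ, (x₁, y₀) ∈ K → (x₂, y₀) ∈ K →
      ∀ t ∈ Set.Icc (0:ℝ) 1,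
        f (t • x₁ + (1 - t) • x₂) = t * f x₁ + (1 - t) * f x₂)
    (hfpos : ∀ x : Fin n → ℝ, (x, y₀) ∈ K → 0 ≤ f x) :
    ∃ G : (Fin n → ℝ) × (Fin m → ℝ) → ℝ,
      ContinuousOn G K ∧
      (∀ (y : Fin m → ℝ) (x₁ x₂ : Fin n → ℝ), (x₁, y) ∈ K → (x₂, y) ∈ K →
        ∀ t ∈ Set.Icc (0:ℝ) 1,
          G (t • x₁ + (1 - t) • x₂, y) = t * G (x₁, y) + (1 - t) * G (x₂, y)) ∧
      (∀ w ∈ K, 0 ≤ G w) ∧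
      (∀ x : Fin n → ℝ, (x, y₀) ∈ K → G (x, y₀) = f x) :=
  stmt_16_general n m K hKc hconv Y hY hint hlhc y₀ hy₀ f hfaff hfpos
end
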